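/- Let λ = √3 and f(z) = ((λ − 1)z + 1)/(−z + λ + 1). Then for every z ∈ ℂ with |z| ≤ 1 + λ and z ≠ 1 + λ, the real part of f(z) satisfies Re(f(z)) ≥ −1/(2(λ + 1)); that is, f maps the closed disk of radius 1 + √3 centered at 0 (minus its pole) into the closed half-plane to the right of the vertical line Re(w) = −1/(2(√3 + 1)). -/

import Mathlib

/-!
For real `a, b` and `R > 0`, the Möbius map `w = (a z + b)/(R - z)` has its pole on the circle
`|z| = R`, so it sends that circle to a vertical line and the disk to a half-plane. Concretely,
expanding the real part over the denominator `|R - z|²` gives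
`Re w = (b - a R)/(2R) + (a R + b)(R² - |z|²)/(2R |R - z|²)`,
whose second term is nonnegative on the disk when `a R + b ≥ 0`. For `f` one has `R = 1 + √3`,
`a = √3 - 1`, `b = 1`, so `a R + b = 3` and `(b - a R)/(2R) = -1/(2(1 + √3))`.
-/

open Complex

/-- The Möbius map `f(z) = ((√3 − 1)z + 1)/(−z + √3 + 1)`. -/
noncomputable def apollonianF (z : ℂ) : ℂ :=
  ((Real.sqrt 3 - 1) * z + 1) / (-z + Real.sqrt 3 + 1)

theorem re_affine_div_ofReal_sub (a b R : ℝ) (z : ℂ) (hR : R ≠ 0) (hz : z ≠ R) :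
    ((a * z + b) / (R - z)).re =
      (b - a * R) / (2 * R) + (a * R + b) * (R ^ 2 - normSq z) / (2 * R * normSq (R - z)) := by
  have hden : normSq (R - z) ≠ 0 := (normSq_pos.2 (sub_ne_zero.2 hz.symm)).ne'
  rw [div_re, ← add_div]
  field_simp
  simp only [normSq_apply, add_re, add_im, mul_re, mul_im, sub_re, sub_im, ofReal_re, ofReal_im]
  ring

theorem le_re_affine_div_ofReal_sub {a b R : ℝ} {z : ℂ} (hR : 0 < R) (hab : 0 ≤ a * R + b)
    (hzR : ‖z‖ ≤ R) (hz : z ≠ R) :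
    (b - a * R) / (2 * R) ≤ ((a * z + b) / (R - z)).re := by
  rw [re_affine_div_ofReal_sub a b R z hR.ne' hz, le_add_iff_nonneg_right]
  have hnormSq : normSq z ≤ R ^ 2 := by
    rw [← Complex.sq_norm]; exact pow_le_pow_left₀ (norm_nonneg z) hzR 2
  have hden : 0 < normSq (R - z) := normSq_pos.2 (sub_ne_zero.2 hz.symm)
  exact div_nonneg (mul_nonneg hab (sub_nonneg.2 hnormSq)) (by positivity)

/-- For every `z` with `|z| ≤ 1 + √3` and `z ≠ 1 + √3`, one has
`Re(f(z)) ≥ −1/(2(√3 + 1))`. -/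
theorem apollonianF_re_lower_bound (z : ℂ)
    (hz : ‖z‖ ≤ 1 + Real.sqrt 3) (hz' : z ≠ (1 + Real.sqrt 3 : ℝ)) :
    -(1 / (2 * (Real.sqrt 3 + 1))) ≤ (apollonianF z).re := by
  have hsq : Real.sqrt 3 ^ 2 = 3 := Real.sq_sqrt (by norm_num)
  have hF : apollonianF z =
      ((Real.sqrt 3 - 1 : ℝ) * z + (1 : ℝ)) / ((1 + Real.sqrt 3 : ℝ) - z) := by
    rw [apollonianF]; push_cast; ring
  have hconst : 1 - (Real.sqrt 3 - 1) * (1 + Real.sqrt 3) = -1 := by linear_combination -hsq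
  calc -(1 / (2 * (Real.sqrt 3 + 1)))
      = (1 - (Real.sqrt 3 - 1) * (1 + Real.sqrt 3)) / (2 * (1 + Real.sqrt 3)) := by
        rw [hconst]; ring
    _ ≤ (apollonianF z).re :=
        hF ▸ le_re_affine_div_ofReal_sub (by positivity) (by linarith) hz hz'
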